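/- arXiv:2402.02546 — 2 statements merged into one kernel-verified Lean document; each statement's English description precedes it below -/
import Mathlib

section
/- Let L = λ*(38/5) and set C = (1/16)·(1/L − L)². Then λ*(19/10) = √((√(4C + 1) − 1)/C) / √2. -/
open Real

/-- Rogers–Ramanujan continued fraction (product form), for `0 < q < 1`. -/
noncomputable def RR (q : ℝ) : ℝ :=
  q ^ ((1:ℝ)/5) *
    ∏' n : ℕ, ((1 - q ^ (5*n+4)) * (1 - q ^ (5*n+1))) /
      ((1 - q ^ (5*n+3)) * (1 - q ^ (5*n+2)))

/-- Ramanujan's theta function `f(-q) = ∏ (1 - q^k)`. -/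
noncomputable def fneg (q : ℝ) : ℝ := ∏' k : ℕ, (1 - q ^ (k+1))

/-- Ramanujan's class invariant `G_n`. -/
noncomputable def Gn (n : ℝ) : ℝ :=
  2 ^ (-(1:ℝ)/4) * Real.exp (π * Real.sqrt n / 24) *
    ∏' j : ℕ, (1 + Real.exp (-((2*(j:ℝ)+1) * π * Real.sqrt n)))

/-- Ramanujan's class invariant `g_n`. -/
noncomputable def gn (n : ℝ) : ℝ :=
  2 ^ (-(1:ℝ)/4) * Real.exp (π * Real.sqrt n / 24) *
    ∏' j : ℕ, (1 - Real.exp (-((2*(j:ℝ)+1) * π * Real.sqrt n)))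

/-- Jacobi theta function `θ₂(0, q)`. -/
noncomputable def theta2 (q : ℝ) : ℝ := 2 * q ^ ((1:ℝ)/4) * ∑' n : ℕ, q ^ (n*(n+1))

/-- Jacobi theta function `θ₃(0, q)`. -/
noncomputable def theta3 (q : ℝ) : ℝ := 1 + 2 * ∑' n : ℕ, q ^ ((n+1)^2)

/-- The elliptic lambda-star function. -/
noncomputable def lambdaStar (r : ℝ) : ℝ :=
  theta2 (Real.exp (-(π * Real.sqrt r))) ^ 2 /
    theta3 (Real.exp (-(π * Real.sqrt r))) ^ 2

/-!
Write `θ(q) = ∑_{n ∈ ℤ} q^{n²}` and `ψ(q) = ∑_{n ∈ ℤ} q^{n(n+1)}`. Splitting the double sum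
`θ(q) θ(εq)` (`ε = ±1`) by the parity of `m + n` and substituting `m = u + v`, `n = u - v`
(resp. `m = u + v + 1`) gives `θ(q)² = θ(q²)² + q ψ(q²)²` and `θ(q) θ(-q) = θ(-q²)²`.
Applied at `√q` these give Jacobi's identity `θ₃⁴ = θ₄⁴ + θ₂⁴`, so `k' = θ₄²/θ₃² = √(1 - k²)`
for `k = λ*(r)`; applied at `q` they give Landen's transformation
`λ*(4r) = (1 - k')/(1 + k')`. For `L = (1 - k')/(1 + k')` one has `1/L - L = 4k'/k²`, hence
`C = k'²/k⁴`, `√(4C + 1) = (1 + k'²)/k²` and `(√(4C + 1) - 1)/C = 2k²`.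
-/

section ThetaSeries

variable {q : ℝ}

/- `thetaSq q = θ₃(q)`, `thetaSq (-q) = θ₄(q)` and `theta2 q = q ^ (1/4) * thetaTri q`. -/
noncomputable def thetaSq (q : ℝ) : ℝ := ∑' n : ℤ, q ^ (n ^ 2)

noncomputable def thetaTri (q : ℝ) : ℝ := ∑' n : ℤ, q ^ (n * (n + 1))

def parityEquiv : (ℤ × ℤ) ⊕ (ℤ × ℤ) ≃ ℤ × ℤ where
  toFun := Sum.elim (fun p => (p.1 + p.2, p.1 - p.2)) (fun p => (p.1 + p.2 + 1, p.1 - p.2))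
  invFun p :=
    if (p.1 + p.2) % 2 = 0 then .inl ((p.1 + p.2) / 2, (p.1 - p.2) / 2)
    else .inr ((p.1 + p.2 - 1) / 2, (p.1 - p.2 - 1) / 2)
  left_inv := by
    rintro (⟨u, v⟩ | ⟨u, v⟩) <;> dsimp only [Sum.elim_inl, Sum.elim_inr] <;> split_ifs <;>
      first | omega | (simp only [Sum.inl.injEq, Sum.inr.injEq, Prod.mk.injEq]; omega)
  right_inv := by
    rintro ⟨m, n⟩
    by_cases h : (m + n) % 2 = 0 <;>
      simp only [h, ↓reduceIte, Sum.elim_inl, Sum.elim_inr, Prod.mk.injEq] <;> omega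

theorem tsum_mul_tsum_eq_of_parity {f g h k : ℤ → ℝ} {c : ℝ}
    (hf : Summable fun n => ‖f n‖) (hg : Summable fun n => ‖g n‖)
    (hh : Summable fun n => ‖h n‖) (hk : Summable fun n => ‖k n‖)
    (heven : ∀ u v, f (u + v) * g (u - v) = h u * h v)
    (hodd : ∀ u v, f (u + v + 1) * g (u - v) = c * (k u * k v)) :
    (∑' n, f n) * ∑' n, g n = (∑' n, h n) ^ 2 + c * (∑' n, k n) ^ 2 := by
  have hfg := (summable_mul_of_summable_norm hf hg).comp_injective parityEquiv.injective
  rw [tsum_mul_tsum_of_summable_norm hf hg, ← parityEquiv.tsum_eq,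
    Summable.tsum_sum (f := fun x => f (parityEquiv x).1 * g (parityEquiv x).2)
      (hfg.comp_injective Sum.inl_injective) (hfg.comp_injective Sum.inr_injective)]
  simp only [parityEquiv, Equiv.coe_fn_mk, Sum.elim_inl, Sum.elim_inr, heven, hodd, tsum_mul_left,
    sq, ← tsum_mul_tsum_of_summable_norm hh hh, ← tsum_mul_tsum_of_summable_norm hk hk]

theorem summable_norm_zpow_of_le (hq₀ : q ≠ 0) (hq : |q| < 1) {e : ℤ → ℤ}
    (he : ∀ n : ℕ, (n : ℤ) ≤ e n) (he' : ∀ n : ℕ, (n : ℤ) ≤ e (-(n + 1))) :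
    Summable fun n => ‖q ^ e n‖ := by
  have hgeo := summable_geometric_of_lt_one (abs_nonneg q) hq
  have hle {m : ℤ} {n : ℕ} (h : (n : ℤ) ≤ m) : ‖q ^ m‖ ≤ |q| ^ n := by
    rw [norm_zpow, Real.norm_eq_abs, ← zpow_natCast]
    exact zpow_le_zpow_right_of_le_one₀ (abs_pos.2 hq₀) hq.le h
  exact .of_nat_of_neg_add_one (hgeo.of_nonneg_of_le (fun _ => norm_nonneg _) fun n => hle (he n))
    (hgeo.of_nonneg_of_le (fun _ => norm_nonneg _) fun n => hle (he' n))

theorem summable_norm_zpow_sq (hq₀ : q ≠ 0) (hq : |q| < 1) :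
    Summable fun n : ℤ => ‖q ^ (n ^ 2)‖ :=
  summable_norm_zpow_of_le hq₀ hq (fun n => by nlinarith) fun n => by nlinarith

theorem summable_norm_zpow_mul_succ (hq₀ : q ≠ 0) (hq : |q| < 1) :
    Summable fun n : ℤ => ‖q ^ (n * (n + 1))‖ :=
  summable_norm_zpow_of_le hq₀ hq (fun n => by nlinarith) fun n => by nlinarith

theorem zpow_sub_sq_of_abs_eq_one {ε : ℝ} (hε : |ε| = 1) (u v : ℤ) :
    ε ^ ((u - v) ^ 2) = ε ^ (u ^ 2) * ε ^ (v ^ 2) := by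
  have hε₀ : ε ≠ 0 := by rintro rfl; simp at hε
  have hε2 : ε ^ (2 : ℤ) = 1 := by rw [zpow_two, ← sq, ← sq_abs, hε, one_pow]
  rw [← zpow_add₀ hε₀, show (u - v) ^ 2 = u ^ 2 + v ^ 2 + 2 * (-(u * v)) by ring,
    zpow_add₀ hε₀, zpow_mul, hε2, one_zpow, mul_one]

theorem sq_zpow (q : ℝ) (m : ℤ) : (q ^ 2) ^ m = q ^ (2 * m) := by
  rw [zpow_mul]; norm_cast

theorem thetaSq_mul_thetaSq_mul (hq₀ : q ≠ 0) (hq : |q| < 1) {ε : ℝ} (hε : |ε| = 1) :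
    thetaSq q * thetaSq (ε * q) =
      thetaSq (ε * q ^ 2) ^ 2 +
        q * (∑' n : ℤ, ε ^ (n ^ 2) * (q ^ 2) ^ (n * (n + 1))) ^ 2 := by
  have hε₀ : ε ≠ 0 := by rintro rfl; simp at hε
  have hq2 : |q ^ 2| < 1 := by rw [abs_pow]; exact pow_lt_one₀ (abs_nonneg q) hq two_ne_zero
  have hεq : |ε * q| < 1 := by rwa [abs_mul, hε, one_mul]
  have hεq2 : |ε * q ^ 2| < 1 := by rwa [abs_mul, hε, one_mul]
  refine tsum_mul_tsum_eq_of_parity (summable_norm_zpow_sq hq₀ hq)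
    (summable_norm_zpow_sq (mul_ne_zero hε₀ hq₀) hεq)
    (summable_norm_zpow_sq (mul_ne_zero hε₀ (pow_ne_zero 2 hq₀)) hεq2)
    (by simpa [norm_mul, norm_zpow, Real.norm_eq_abs, hε] using
      summable_norm_zpow_mul_succ (pow_ne_zero 2 hq₀) hq2) (fun u v => ?_) fun u v => ?_
  · rw [mul_zpow, mul_zpow, mul_zpow, zpow_sub_sq_of_abs_eq_one hε, sq_zpow, sq_zpow]
    have : q ^ ((u + v) ^ 2) * q ^ ((u - v) ^ 2) = q ^ (2 * u ^ 2) * q ^ (2 * v ^ 2) := by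
      rw [← zpow_add₀ hq₀, ← zpow_add₀ hq₀]; ring_nf
    linear_combination ε ^ (u ^ 2) * ε ^ (v ^ 2) * this
  · rw [mul_zpow, zpow_sub_sq_of_abs_eq_one hε, sq_zpow, sq_zpow]
    have : q ^ ((u + v + 1) ^ 2) * q ^ ((u - v) ^ 2) =
        q * (q ^ (2 * (u * (u + 1))) * q ^ (2 * (v * (v + 1)))) := by
      rw [← zpow_add₀ hq₀, ← zpow_add₀ hq₀, ← zpow_one_add₀ hq₀]; ring_nf
    linear_combination ε ^ (u ^ 2) * ε ^ (v ^ 2) * this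

theorem thetaSq_sq (hq₀ : q ≠ 0) (hq : |q| < 1) :
    thetaSq q ^ 2 = thetaSq (q ^ 2) ^ 2 + q * thetaTri (q ^ 2) ^ 2 := by
  simpa [sq, thetaTri] using thetaSq_mul_thetaSq_mul hq₀ hq (ε := 1) (by simp)

theorem tsum_neg_one_zpow_sq_mul_zpow_mul_succ (x : ℝ) :
    ∑' n : ℤ, (-1) ^ (n ^ 2) * x ^ (n * (n + 1)) = 0 := by
  set f : ℤ → ℝ := fun n => (-1) ^ (n ^ 2) * x ^ (n * (n + 1))
  -- `n ↦ -1 - n` preserves `n (n + 1)` and flips the parity of `n`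
  have hf : ∀ n, f (Equiv.subLeft (-1) n) = -f n := fun n => by
    have : (-1 - n) ^ 2 = n ^ 2 + (2 * n + 1) := by ring
    simp only [f, Equiv.subLeft_apply]
    rw [this, zpow_add₀ (by norm_num), (odd_two_mul_add_one n).neg_one_zpow]
    ring_nf
  have := (Equiv.subLeft (-1 : ℤ)).tsum_eq f
  rw [tsum_congr hf, tsum_neg] at this
  linarith

theorem thetaSq_mul_thetaSq_neg (hq₀ : q ≠ 0) (hq : |q| < 1) :
    thetaSq q * thetaSq (-q) = thetaSq (-q ^ 2) ^ 2 := by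
  simpa [tsum_neg_one_zpow_sq_mul_zpow_mul_succ] using
    thetaSq_mul_thetaSq_mul hq₀ hq (ε := -1) (by simp)

theorem thetaSq_pow_four (hq₀ : 0 < q) (hq : q < 1) :
    thetaSq q ^ 4 = thetaSq (-q) ^ 4 + q * thetaTri q ^ 4 := by
  set p := √q
  have hp : p ^ 2 = q := Real.sq_sqrt hq₀.le
  have hp₀ : p ≠ 0 := (Real.sqrt_pos.2 hq₀).ne'
  have hp₁ : |p| < 1 := by
    rw [abs_of_nonneg (Real.sqrt_nonneg q)]
    exact (Real.sqrt_lt_sqrt hq₀.le hq).trans_eq Real.sqrt_one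
  have hpos := thetaSq_sq hp₀ hp₁
  have hneg := thetaSq_sq (neg_ne_zero.2 hp₀) (by rwa [abs_neg])
  have h₀ := thetaSq_mul_thetaSq_neg hp₀ hp₁
  rw [neg_sq, hp] at hneg
  rw [hp] at hpos h₀
  linear_combination (thetaSq p * thetaSq (-p) + thetaSq (-q) ^ 2) * h₀
    - (thetaSq q ^ 2 + p * thetaTri q ^ 2) * hneg - thetaSq (-p) ^ 2 * hpos + thetaTri q ^ 4 * hp

theorem thetaSq_pos (hq₀ : 0 < q) (hq : q < 1) : 0 < thetaSq q :=
  (summable_norm_zpow_sq hq₀.ne' (by rwa [abs_of_pos hq₀])).of_norm.tsum_pos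
    (fun n => (zpow_pos hq₀ _).le) 0 (zpow_pos hq₀ _)

theorem thetaTri_pos (hq₀ : 0 < q) (hq : q < 1) : 0 < thetaTri q :=
  (summable_norm_zpow_mul_succ hq₀.ne' (by rwa [abs_of_pos hq₀])).of_norm.tsum_pos
    (fun n => (zpow_pos hq₀ _).le) 0 (zpow_pos hq₀ _)

theorem theta3_eq_thetaSq (hq₀ : q ≠ 0) (hq : |q| < 1) : theta3 q = thetaSq q := by
  have hs := (summable_norm_zpow_sq hq₀ hq).of_norm
  have hsucc (n : ℕ) : q ^ (((n : ℤ) + 1) ^ 2) = q ^ ((n + 1) ^ 2) := by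
    rw [← zpow_natCast]; norm_cast
  have hneg (n : ℕ) : q ^ ((-((n : ℤ) + 1)) ^ 2) = q ^ ((n + 1) ^ 2) := by
    rw [neg_sq, hsucc]
  rw [thetaSq, tsum_of_add_one_of_neg_add_one (f := fun n : ℤ => q ^ (n ^ 2))
    (hs.comp_injective (i := fun n : ℕ => (n : ℤ) + 1) fun _ _ h => by simpa using h)
    (hs.comp_injective (i := fun n : ℕ => -((n : ℤ) + 1)) fun _ _ h => by simpa using h)]
  simp only [hsucc, hneg, theta3]
  rw [zero_pow two_ne_zero, zpow_zero]
  ring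

theorem thetaTri_eq (hq₀ : q ≠ 0) (hq : |q| < 1) :
    thetaTri q = 2 * ∑' n : ℕ, q ^ (n * (n + 1)) := by
  have hs := (summable_norm_zpow_mul_succ hq₀ hq).of_norm
  have hnat (n : ℕ) : q ^ ((n : ℤ) * (n + 1)) = q ^ (n * (n + 1)) := by
    rw [← zpow_natCast]; norm_cast
  have hneg (n : ℕ) : q ^ (-((n : ℤ) + 1) * (-((n : ℤ) + 1) + 1)) = q ^ (n * (n + 1)) := by
    rw [← hnat]; ring_nf
  rw [thetaTri, tsum_of_nat_of_neg_add_one (f := fun n : ℤ => q ^ (n * (n + 1)))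
    (hs.comp_injective Nat.cast_injective)
    (hs.comp_injective (i := fun n : ℕ => -((n : ℤ) + 1)) fun _ _ h => by simpa using h)]
  simp only [hnat, hneg]
  ring

theorem theta2_sq (hq₀ : 0 < q) (hq : q < 1) : theta2 q ^ 2 = √q * thetaTri q ^ 2 := by
  have : (q ^ (1 / 4 : ℝ)) ^ 2 = √q := by
    rw [Real.sqrt_eq_rpow, ← Real.rpow_natCast, ← Real.rpow_mul hq₀.le]; norm_num
  rw [thetaTri_eq hq₀.ne' (by rwa [abs_of_pos hq₀]), theta2, mul_pow, mul_pow, this]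
  ring

theorem thetaSq_neg_pos_of_lt_third (hq₀ : 0 < q) (hq : q < 1 / 3) : 0 < thetaSq (-q) := by
  rw [← theta3_eq_thetaSq (neg_ne_zero.2 hq₀.ne') (by rw [abs_neg, abs_of_pos hq₀]; linarith),
    theta3]
  have hgeo : HasSum (fun n : ℕ => q * q ^ n) (q * (1 - q)⁻¹) :=
    (hasSum_geometric_of_lt_one hq₀.le (by linarith)).mul_left q
  have hbound : ‖∑' n : ℕ, (-q) ^ ((n + 1) ^ 2)‖ ≤ q * (1 - q)⁻¹ :=
    tsum_of_norm_bounded hgeo fun n => by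
      rw [norm_pow, norm_neg, Real.norm_eq_abs, abs_of_pos hq₀, ← pow_succ']
      exact pow_le_pow_of_le_one hq₀.le (by linarith) (Nat.le_self_pow two_ne_zero _)
  have hsmall : q * (1 - q)⁻¹ < 1 / 2 := by
    rw [← div_eq_mul_inv, div_lt_iff₀ (by linarith)]; linarith
  linarith [neg_le_of_abs_le (Real.norm_eq_abs _ ▸ hbound)]

theorem thetaSq_neg_pos (hq₀ : 0 < q) (hq : q < 1) : 0 < thetaSq (-q) := by
  -- `θ(x) θ(-x) = θ(-x²)²` carries positivity from `-x²` to `-x`; iterate until `x < 1/3`.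
  have step {x : ℝ} (hx₀ : 0 < x) (hx : x < 1) (h : 0 < thetaSq (-x ^ 2)) : 0 < thetaSq (-x) :=
    pos_of_mul_pos_right
      ((thetaSq_mul_thetaSq_neg hx₀.ne' (by rwa [abs_of_pos hx₀])) ▸ pow_pos h 2)
      (thetaSq_pos hx₀ hx).le
  have iter (n : ℕ) :
      ∀ x, 0 < x → x < 1 → 0 < thetaSq (-x ^ 2 ^ n) → 0 < thetaSq (-x) := by
    induction n with
    | zero => intro x _ _ h; simpa using h
    | succ n ih =>
      intro x hx₀ hx h
      refine step hx₀ hx (ih _ (pow_pos hx₀ 2) (pow_lt_one₀ hx₀.le hx two_ne_zero) ?_)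
      rwa [← pow_mul, ← pow_succ']
  obtain ⟨n, hn⟩ := exists_pow_lt_of_lt_one (by norm_num : (0 : ℝ) < 1 / 3) hq
  exact iter n q hq₀ hq (thetaSq_neg_pos_of_lt_third (pow_pos hq₀ _)
    ((pow_le_pow_of_le_one hq₀.le hq.le Nat.lt_two_pow_self.le).trans_lt hn))

end ThetaSeries

/- The modulus `k` as a function of the nome `q`:
`lambdaStar r = nomeModulus (exp (-(π * √r)))` holds by definition. -/
noncomputable def nomeModulus (q : ℝ) : ℝ := theta2 q ^ 2 / theta3 q ^ 2

section NomeModulus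

variable {q : ℝ}

theorem nomeModulus_eq (hq₀ : 0 < q) (hq : q < 1) :
    nomeModulus q = √q * thetaTri q ^ 2 / thetaSq q ^ 2 := by
  rw [nomeModulus, theta2_sq hq₀ hq, theta3_eq_thetaSq hq₀.ne' (by rwa [abs_of_pos hq₀])]

theorem sqrt_one_sub_nomeModulus_sq (hq₀ : 0 < q) (hq : q < 1) :
    √(1 - nomeModulus q ^ 2) = thetaSq (-q) ^ 2 / thetaSq q ^ 2 := by
  have hθ := (thetaSq_pos hq₀ hq).ne'
  have hk : 1 - nomeModulus q ^ 2 = (thetaSq (-q) ^ 2 / thetaSq q ^ 2) ^ 2 := by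
    rw [nomeModulus_eq hq₀ hq]
    field_simp
    rw [Real.sq_sqrt hq₀.le]
    linear_combination thetaSq_pow_four hq₀ hq
  rw [hk, Real.sqrt_sq (by positivity)]

theorem nomeModulus_sq (hq₀ : 0 < q) (hq : q < 1) :
    nomeModulus (q ^ 2) =
      (1 - √(1 - nomeModulus q ^ 2)) / (1 + √(1 - nomeModulus q ^ 2)) := by
  have hq' : |q| < 1 := by rwa [abs_of_pos hq₀]
  have hpos := thetaSq_sq hq₀.ne' hq'
  have hneg := thetaSq_sq (neg_ne_zero.2 hq₀.ne') (by rwa [abs_neg])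
  have hθ := (thetaSq_pos hq₀ hq).ne'
  have hθ2 := (thetaSq_pos (pow_pos hq₀ 2) (pow_lt_one₀ hq₀.le hq two_ne_zero)).ne'
  rw [neg_sq] at hneg
  rw [sqrt_one_sub_nomeModulus_sq hq₀ hq,
    nomeModulus_eq (pow_pos hq₀ 2) (pow_lt_one₀ hq₀.le hq two_ne_zero), Real.sqrt_sq hq₀.le]
  field_simp
  linear_combination (q * thetaTri (q ^ 2) ^ 2 - thetaSq (q ^ 2) ^ 2) * hpos
    + (q * thetaTri (q ^ 2) ^ 2 + thetaSq (q ^ 2) ^ 2) * hneg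

theorem nomeModulus_pos (hq₀ : 0 < q) (hq : q < 1) : 0 < nomeModulus q := by
  rw [nomeModulus_eq hq₀ hq]
  have := thetaTri_pos hq₀ hq
  have := thetaSq_pos hq₀ hq
  positivity

theorem nomeModulus_lt_one (hq₀ : 0 < q) (hq : q < 1) : nomeModulus q < 1 := by
  have hk' : 0 < √(1 - nomeModulus q ^ 2) := by
    rw [sqrt_one_sub_nomeModulus_sq hq₀ hq]
    have := thetaSq_neg_pos hq₀ hq
    have := thetaSq_pos hq₀ hq
    positivity
  nlinarith [Real.sqrt_pos.1 hk', nomeModulus_pos hq₀ hq]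

end NomeModulus

section LambdaStar

variable {r : ℝ}

theorem exp_neg_pi_mul_sqrt_lt_one (hr : 0 < r) : Real.exp (-(π * √r)) < 1 :=
  Real.exp_lt_one_iff.2 (neg_neg_of_pos (mul_pos pi_pos (Real.sqrt_pos.2 hr)))

theorem lambdaStar_pos (hr : 0 < r) : 0 < lambdaStar r :=
  nomeModulus_pos (Real.exp_pos _) (exp_neg_pi_mul_sqrt_lt_one hr)

theorem lambdaStar_lt_one (hr : 0 < r) : lambdaStar r < 1 :=
  nomeModulus_lt_one (Real.exp_pos _) (exp_neg_pi_mul_sqrt_lt_one hr)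

theorem lambdaStar_four_mul (hr : 0 < r) :
    lambdaStar (4 * r) = (1 - √(1 - lambdaStar r ^ 2)) / (1 + √(1 - lambdaStar r ^ 2)) := by
  have hnome : Real.exp (-(π * √(4 * r))) = Real.exp (-(π * √r)) ^ 2 := by
    rw [Real.sqrt_mul (by norm_num), show (4 : ℝ) = 2 ^ 2 by norm_num,
      Real.sqrt_sq zero_le_two, ← Real.exp_nat_mul]
    ring_nf
  rw [lambdaStar, hnome]
  exact nomeModulus_sq (Real.exp_pos _) (exp_neg_pi_mul_sqrt_lt_one hr)

end LambdaStar

theorem modulus_eq_of_landen {k L C : ℝ} (hk₀ : 0 < k) (hk : k < 1)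
    (hL : L = (1 - √(1 - k ^ 2)) / (1 + √(1 - k ^ 2))) (hC : C = (1 / 16) * (1 / L - L) ^ 2) :
    k = √((√(4 * C + 1) - 1) / C) / √2 := by
  set k' := √(1 - k ^ 2)
  have hk'₀ : 0 < k' := Real.sqrt_pos.2 (by nlinarith)
  have hk' : k' ^ 2 = 1 - k ^ 2 := Real.sq_sqrt (by nlinarith)
  have hk'₁ : 1 - k' ≠ 0 := by nlinarith
  have hC' : C = k' ^ 2 / k ^ 4 := by
    rw [hC, hL]
    field_simp
    linear_combination 16 * k' ^ 2 * (1 - k' ^ 2 + k ^ 2) * hk'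
  have hsqrt : √(4 * C + 1) = (1 + k' ^ 2) / k ^ 2 := by
    rw [Real.sqrt_eq_iff_mul_self_eq_of_pos (by positivity), hC']
    field_simp
    linear_combination (-(1 - k' ^ 2 + k ^ 2)) * hk'
  have hfrac : (√(4 * C + 1) - 1) / C = (√2 * k) ^ 2 := by
    rw [hsqrt, hC', mul_pow, Real.sq_sqrt zero_le_two]
    field_simp
    linear_combination -hk'
  rw [hfrac, Real.sqrt_sq (by positivity), mul_div_cancel_left₀ _ (by positivity)]

theorem stmt_9 (L C : ℝ) (hL : L = lambdaStar (38/5))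
    (hC : C = (1/16) * (1/L - L) ^ 2) :
    lambdaStar (19/10) = Real.sqrt ((Real.sqrt (4 * C + 1) - 1) / C) / Real.sqrt 2 := by
  have hr : (0 : ℝ) < 19 / 10 := by norm_num
  rw [show (38 / 5 : ℝ) = 4 * (19 / 10) by norm_num, lambdaStar_four_mul hr] at hL
  exact modulus_eq_of_landen (lambdaStar_pos hr) (lambdaStar_lt_one hr) hL hC
end

section
/- For every real n > 0, Ramanujan's class invariants satisfy the modular relation g_{4n} = 2^(1/4) · g_n · G_n. -/
open Real

/-!
With `q = e^{-π√n}` one has `e^{-π√(4n)} = q²`, so the product in `g_{4n}` is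
`∏ (1 - q^{2(2j+1)}) = ∏ (1 - q^{2j+1}) · ∏ (1 + q^{2j+1})`, the products in `g_n` and `G_n`;
the prefactors agree because `e^{π√(4n)/24} = (e^{π√n/24})²` and `2^{-1/4} = 2^{1/4} · (2^{-1/4})²`.
-/

lemma summable_exp_neg_odd_mul {c : ℝ} (hc : 0 < c) :
    Summable fun j : ℕ ↦ exp (-((2 * j + 1) * c)) := by
  have hr : exp (-(2 * c)) < 1 := exp_lt_one_iff.mpr (by linarith)
  refine ((summable_geometric_of_lt_one (exp_nonneg _) hr).mul_left (exp (-c))).congr fun j ↦ ?_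
  rw [← exp_nat_mul, ← exp_add]
  ring_nf

lemma tprod_one_sub_sq {ι : Type*} {y : ι → ℝ} (hy : Summable y) :
    ∏' i, (1 - y i ^ 2) = (∏' i, (1 - y i)) * ∏' i, (1 + y i) := by
  have hsub : Multipliable fun i ↦ 1 - y i := by
    simpa [sub_eq_add_neg] using Real.multipliable_one_add_of_summable hy.neg
  rw [← hsub.tprod_mul (Real.multipliable_one_add_of_summable hy)]
  exact tprod_congr fun i ↦ by ring

lemma sqrt_four_mul (x : ℝ) : √(4 * x) = 2 * √x := by
  rw [sqrt_mul (by norm_num), show (4 : ℝ) = 2 ^ 2 by norm_num, sqrt_sq zero_le_two]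

theorem stmt_19 (n : ℝ) (hn : 0 < n) :
    gn (4 * n) = 2 ^ ((1:ℝ)/4) * gn n * Gn n := by
  set y : ℕ → ℝ := fun j ↦ exp (-((2 * j + 1) * π * √n))
  have hy : Summable y := by
    simpa only [y, mul_assoc] using summable_exp_neg_odd_mul (by positivity : 0 < π * √n)
  have hsquare : ∀ j : ℕ, exp (-((2 * j + 1) * π * √(4 * n))) = y j ^ 2 := fun j ↦ by
    rw [sqrt_four_mul, ← exp_nat_mul]
    ring_nf
  have hprefactor : (2 : ℝ) ^ ((1 : ℝ) / 4) * 2 ^ (-(1 : ℝ) / 4) = 1 := by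
    rw [← rpow_add two_pos]
    norm_num
  have hexp : exp (π * √(4 * n) / 24) = exp (π * √n / 24) * exp (π * √n / 24) := by
    rw [sqrt_four_mul, ← exp_add]
    ring_nf
  unfold gn Gn
  rw [hexp, tprod_congr fun j ↦ congrArg (1 - ·) (hsquare j), tprod_one_sub_sq hy]
  linear_combination -(2 ^ (-(1 : ℝ) / 4) * exp (π * √n / 24) ^ 2 *
    (∏' j, (1 - y j)) * ∏' j, (1 + y j)) * hprefactor
end
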